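/- Let H and K be graphs on disjoint vertex sets except for two shared vertices w₁, w₂ forming a shared edge, and let G be their 2-clique sum along that edge. If every chordless cycle of H has length g and every chordless cycle of K has length g, then every chordless cycle of G has length g. -/

import Mathlib

/-!
If a chordless cycle of `G` had a vertex `n ∈ A \ B` and a vertex `m ∈ B \ A`, the two arcs of
the cycle between `n` and `m` would each cross the separating clique `A ∩ B`, at distinct
vertices since the arcs meet only in `n` and `m`. The edge joining these two crossing points
lies on neither arc, so it would be a chord. Hence a chordless cycle of `G` lies inside `A` or
inside `B`, where it is a chordless cycle of the induced graph.
-/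

/-- A cycle (closed walk) `c` is chordless if every edge of `G` joining two vertices
of `c` is an edge of `c`. -/
def SimpleGraph.IsChordless {V : Type*} (G : SimpleGraph V) {u : V} (c : G.Walk u u) : Prop :=
  ∀ a b : V, G.Adj a b → a ∈ c.support → b ∈ c.support → s(a, b) ∈ c.edges

namespace SimpleGraph

variable {V W : Type*} {G : SimpleGraph V}

namespace IsChordless

theorem of_map {G' : SimpleGraph W} {f : G →g G'} (hf : Function.Injective f) {u : V}
    {c : G.Walk u u} (h : G'.IsChordless (c.map f)) : G.IsChordless c := by
  intro a b hab ha hb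
  have hmem := h (f a) (f b) (f.map_adj hab)
    (by simpa using List.mem_map_of_mem ha) (by simpa using List.mem_map_of_mem hb)
  rwa [Walk.edges_map, ← Sym2.map_mk, List.mem_map_of_injective (Sym2.map.injective hf)]
    at hmem

theorem rotate [DecidableEq V] {u v : V} {c : G.Walk u u} (hcl : G.IsChordless c)
    (hv : v ∈ c.support) :
    G.IsChordless (c.rotate v hv) := by
  intro a b hab ha hb
  rw [Walk.mem_support_rotate_iff] at ha hb
  exact (c.rotate_edges v hv).mem_iff.mpr (hcl a b hab ha hb)

theorem length_eq_of_induce {s : Set V} {n : ℕ}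
    (hs : ∀ (x : s) (c : (G.induce s).Walk x x), c.IsCycle →
      (G.induce s).IsChordless c → c.length = n)
    {u : V} {c : G.Walk u u} (hcl : G.IsChordless c) (hc : c.IsCycle)
    (hsupp : ∀ x ∈ c.support, x ∈ s) : c.length = n := by
  have hinj : Function.Injective (Embedding.induce (G := G) s).toHom := Subtype.val_injective
  have hmap := c.map_induce hsupp
  have hlen : (c.induce s hsupp).length = c.length :=
    (Walk.length_map _ _).symm.trans (congrArg Walk.length hmap)
  refine hlen ▸ hs _ _ ?_ (of_map hinj (by rwa [hmap]))
  exact (Walk.isCycle_map_iff_of_injective hinj).mp (by rwa [hmap])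

end IsChordless

namespace Walk

variable {A B : Set V}

theorem exists_mem_support_mem_inter
    (hsplit : ∀ a b : V, G.Adj a b → (a ∈ A ∧ b ∈ A) ∨ (a ∈ B ∧ b ∈ B)) :
    ∀ {u v : V} (p : G.Walk u v), u ∈ A → v ∉ A → ∃ w ∈ p.support, w ∈ A ∩ B
  | _, _, nil, hu, hv => absurd hu hv
  | u, _, cons hadj q, hu, hv => by
    by_cases huB : u ∈ B
    · exact ⟨u, by simp, hu, huB⟩
    · have hnext := (hsplit _ _ hadj).resolve_right (fun h => huB h.1)
      obtain ⟨w, hw, hwAB⟩ := exists_mem_support_mem_inter hsplit q hnext.2 hv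
      exact ⟨w, by simp [hw], hwAB⟩

theorem IsCycle.eq_or_eq_of_mem_support_append {u v x : V} {p : G.Walk u v} {q : G.Walk v u}
    (hc : (p.append q).IsCycle) (hp : x ∈ p.support) (hq : x ∈ q.support) :
    x = u ∨ x = v := by
  by_contra! hx
  have hdisj := List.disjoint_of_nodup_append (tail_support_append p q ▸ hc.support_nodup)
  exact hdisj (((p.mem_support_iff).mp hp).resolve_left hx.1)
    (((q.mem_support_iff).mp hq).resolve_left hx.2)

theorem IsCycle.support_subset_or_of_isChordless [DecidableEq V] (hcover : A ∪ B = Set.univ)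
    (hsplit : ∀ a b : V, G.Adj a b → (a ∈ A ∧ b ∈ A) ∨ (a ∈ B ∧ b ∈ B))
    (hclique : G.IsClique (A ∩ B)) {u : V} {c : G.Walk u u} (hc : c.IsCycle)
    (hcl : G.IsChordless c) : (∀ x ∈ c.support, x ∈ A) ∨ ∀ x ∈ c.support, x ∈ B := by
  by_contra! ⟨⟨m, hm, hmA⟩, ⟨n, hn, hnB⟩⟩
  have hnA : n ∈ A := (hcover.symm ▸ Set.mem_univ n : n ∈ A ∪ B).resolve_right hnB
  set c' := c.rotate n hn
  have hm' : m ∈ c'.support := (c.mem_support_rotate_iff n hn).mpr hm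
  set p := c'.takeUntil m hm'
  set q := c'.dropUntil m hm'
  have hpq : p.append q = c' := take_spec c' hm'
  have hc' : (p.append q).IsCycle := hpq ▸ hc.rotate hn
  have hcl' : G.IsChordless (p.append q) := hpq ▸ hcl.rotate hn
  have hsep : ∀ w ∈ A ∩ B, w ∈ p.support → w ∉ q.support := fun w hw hwp hwq =>
    (hc'.eq_or_eq_of_mem_support_append hwp hwq).elim
      (fun h => hnB (h ▸ hw.2)) (fun h => hmA (h ▸ hw.1))
  obtain ⟨a, ha, haAB⟩ := exists_mem_support_mem_inter hsplit p hnA hmA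
  obtain ⟨b, hb, hbAB⟩ := exists_mem_support_mem_inter hsplit q.reverse hnA hmA
  rw [support_reverse, List.mem_reverse] at hb
  have hab : a ≠ b := fun h => hsep a haAB ha (h ▸ hb)
  have hedge : s(a, b) ∈ p.edges ++ q.edges :=
    edges_append p q ▸ hcl' a b (hclique haAB hbAB hab) (by simp [ha]) (by simp [hb])
  rcases List.mem_append.mp hedge with h | h
  · exact hsep b hbAB (p.snd_mem_support_of_mem_edges h) hb
  · exact hsep a haAB ha (q.fst_mem_support_of_mem_edges h)

end Walk

end SimpleGraph

open SimpleGraph in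
theorem stmt19_general {V : Type*} (G : SimpleGraph V) (A B : Set V) (w₁ w₂ : V)
    (hcover : A ∪ B = Set.univ) (hinter : A ∩ B = {w₁, w₂}) (hw : G.Adj w₁ w₂)
    (hsplit : ∀ a b : V, G.Adj a b → (a ∈ A ∧ b ∈ A) ∨ (a ∈ B ∧ b ∈ B))
    (g : ℕ)
    (hA : ∀ (x : ↥A) (c : (G.induce A).Walk x x), c.IsCycle →
      (G.induce A).IsChordless c → c.length = g)
    (hB : ∀ (x : ↥B) (c : (G.induce B).Walk x x), c.IsCycle →
      (G.induce B).IsChordless c → c.length = g)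
    (x : V) (c : G.Walk x x) (hc : c.IsCycle) (hcl : G.IsChordless c) :
    c.length = g := by
  classical
  have hclique : G.IsClique (A ∩ B) := hinter ▸ isClique_pair.mpr fun _ => hw
  rcases hc.support_subset_or_of_isChordless hcover hsplit hclique hcl with hsA | hsB
  · exact hcl.length_eq_of_induce hA hc hsA
  · exact hcl.length_eq_of_induce hB hc hsB

/-- Let `G` be the 2-clique sum of the graphs induced on `A` and on `B`, glued along the
shared edge `{w₁, w₂}`. If every chordless cycle of `G.induce A` has length `g` and every
chordless cycle of `G.induce B` has length `g`, then every chordless cycle of `G` has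
length `g`. -/
theorem stmt19 {V : Type*} (G : SimpleGraph V) (A B : Set V) (w₁ w₂ : V) (hne : w₁ ≠ w₂)
    (hcover : A ∪ B = Set.univ) (hinter : A ∩ B = {w₁, w₂}) (hw : G.Adj w₁ w₂)
    (hsplit : ∀ a b : V, G.Adj a b → (a ∈ A ∧ b ∈ A) ∨ (a ∈ B ∧ b ∈ B))
    (g : ℕ)
    (hA : ∀ (x : ↥A) (c : (G.induce A).Walk x x), c.IsCycle →
      (G.induce A).IsChordless c → c.length = g)
    (hB : ∀ (x : ↥B) (c : (G.induce B).Walk x x), c.IsCycle →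
      (G.induce B).IsChordless c → c.length = g)
    (x : V) (c : G.Walk x x) (hc : c.IsCycle) (hcl : G.IsChordless c) :
    c.length = g :=
  stmt19_general G A B w₁ w₂ hcover hinter hw hsplit g hA hB x c hc hcl
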